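/- Let u be a standard episturmian sequence over an alphabet A constructed by palindromic closures. Then the string attractor profile function s_u(n) (the minimal size of a string attractor of the length-n prefix of u) equals the number of distinct letters occurring in the length-n prefix of u; in particular, s_u is eventually constant. -/

import Mathlib

open List

variable {A : Type*}

/-- `p` is the palindromic closure `(wa)⁺`: the shortest palindrome with `w ++ [a]` as prefix. -/
def IsPalClosure (w : List A) (a : A) (p : List A) : Prop :=
  p.Palindrome ∧ (w ++ [a]) <+: p ∧
    ∀ q : List A, q.Palindrome → (w ++ [a]) <+: q → p.length ≤ q.length

/-- `v` occurs in `w` at position `i` (occupying positions `i, …, i + |v| - 1`). -/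
def OccAt (w v : List A) (i : ℕ) : Prop :=
  i + v.length ≤ w.length ∧ (w.drop i).take v.length = v

/-- `Γ` is a string attractor of `w`: every nonempty factor of `w` has an occurrence
containing a position of `Γ`. -/
def IsAttractor (w : List A) (Γ : Set ℕ) : Prop :=
  (∀ k ∈ Γ, k < w.length) ∧
  ∀ v : List A, v ≠ [] → v <:+: w →
    ∃ i, OccAt w v i ∧ ∃ k ∈ Γ, i ≤ k ∧ k < i + v.length

/-- `m` is the maximal length of a palindromic prefix `p` of `v` such that
`p ++ [a]` is a prefix of `v`. -/
def IsMaxPalPrefLen (v : List A) (a : A) (m : ℕ) : Prop :=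
  (∃ p : List A, p.Palindrome ∧ (p ++ [a]) <+: v ∧ p.length = m) ∧
  ∀ p : List A, p.Palindrome → (p ++ [a]) <+: v → p.length ≤ m

lemma occAt_iff {w v : List A} {i : ℕ} :
    OccAt w v i ↔ ∃ s t, w = s ++ v ++ t ∧ s.length = i := by
  constructor
  · rintro ⟨h1, h2⟩
    refine ⟨w.take i, w.drop (i + v.length), ?_, by simp; omega⟩
    conv_lhs => rw [← List.take_append_drop i w,
      ← List.take_append_drop v.length (w.drop i)]
    rw [h2, List.drop_drop, List.append_assoc, add_comm]
  · rintro ⟨s, t, rfl, rfl⟩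
    constructor
    · simp [List.length_append]
    · rw [List.append_assoc, List.drop_left, List.take_left]

lemma occAt_infix {w v : List A} {i : ℕ} (h : OccAt w v i) : v <:+: w := by
  obtain ⟨s, t, rfl, -⟩ := occAt_iff.1 h
  exact ⟨s, t, by simp⟩

lemma infix_occAt {w v : List A} (h : v <:+: w) : ∃ i, OccAt w v i := by
  obtain ⟨s, t, rfl⟩ := h
  exact ⟨s.length, occAt_iff.2 ⟨s, t, by simp, rfl⟩⟩

lemma prefix_occAt {w v : List A} (h : v <+: w) : OccAt w v 0 := by
  obtain ⟨t, rfl⟩ := h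
  exact occAt_iff.2 ⟨[], t, by simp, rfl⟩

lemma suffix_occAt {w v : List A} (h : v <:+ w) :
    ∃ i, i + v.length = w.length ∧ OccAt w v i := by
  obtain ⟨s, rfl⟩ := h
  exact ⟨s.length, by simp, occAt_iff.2 ⟨s, [], by simp, rfl⟩⟩

lemma OccAt.prefix {w w' v : List A} {i : ℕ} (h : OccAt w v i) (hp : w <+: w') :
    OccAt w' v i := by
  obtain ⟨s, t, rfl, rfl⟩ := occAt_iff.1 h
  obtain ⟨r, rfl⟩ := hp
  exact occAt_iff.2 ⟨s, t ++ r, by simp, rfl⟩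

lemma OccAt.trans {w₁ w₂ v : List A} {i d : ℕ} (h : OccAt w₂ v i)
    (h2 : OccAt w₁ w₂ d) : OccAt w₁ v (d + i) := by
  obtain ⟨s, t, rfl, rfl⟩ := occAt_iff.1 h
  obtain ⟨s', t', rfl, rfl⟩ := occAt_iff.1 h2
  exact occAt_iff.2 ⟨s' ++ s, t ++ t', by simp, by simp⟩

lemma OccAt.take {w v : List A} {i n : ℕ} (h : OccAt w v i)
    (hn : i + v.length ≤ n) : OccAt (w.take n) v i := by
  obtain ⟨h1, h2⟩ := h
  refine ⟨by simp; omega, ?_⟩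
  rw [List.drop_take, List.take_take, min_eq_left (by omega), h2]

lemma OccAt.drop {w v : List A} {i d : ℕ} (h : OccAt w v i) (hd : d ≤ i) :
    OccAt (w.drop d) v (i - d) := by
  obtain ⟨h1, h2⟩ := h
  refine ⟨by simp; omega, ?_⟩
  rw [List.drop_drop, show d + (i-d) = i by omega, h2]

section Epi
set_option linter.unusedSectionVars false

variable [DecidableEq A] {W : ℕ → List A} {δ : ℕ → A} {u : ℕ → A}
variable (h0 : W 0 = []) (hstep : ∀ n, IsPalClosure (W n) (δ n) (W (n+1)))
variable (hu : ∀ n i, (hi : i < (W n).length) → (W n).get ⟨i, hi⟩ = u i)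

include hstep

include h0 in
lemma pal_W (k : ℕ) : (W k).Palindrome := by
  cases k with
  | zero => rw [h0]; exact List.Palindrome.nil
  | succ k => exact (hstep k).1

lemma pref_snoc_succ (k : ℕ) : W k ++ [δ k] <+: W (k+1) := (hstep k).2.1

lemma W_pref_succ (k : ℕ) : W k <+: W (k+1) :=
  (List.prefix_append _ _).trans (pref_snoc_succ hstep k)

lemma W_pref {j k : ℕ} (h : j ≤ k) : W j <+: W k := by
  induction k with
  | zero => cases Nat.le_zero.1 h; exact List.prefix_refl _
  | succ k ih =>
    rcases Nat.lt_or_ge j (k+1) with h' | h'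
    · exact (ih (by omega)).trans (W_pref_succ hstep k)
    · cases le_antisymm h h'; exact List.prefix_refl _

lemma len_lt (k : ℕ) : (W k).length < (W (k+1)).length := by
  have := (pref_snoc_succ hstep k).length_le
  simpa using this

lemma len_mono {j k : ℕ} (h : j ≤ k) : (W j).length ≤ (W k).length :=
  (W_pref hstep h).length_le

lemma len_lt_of_lt {j k : ℕ} (h : j < k) : (W j).length < (W k).length :=
  lt_of_lt_of_le (len_lt hstep j) (len_mono hstep h)

lemma le_len (k : ℕ) : k ≤ (W k).length := by
  induction k with
  | zero => omega
  | succ k ih => have := len_lt hstep k; omega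

lemma pref_snoc {j k : ℕ} (h : j < k) : W j ++ [δ j] <+: W k :=
  (pref_snoc_succ hstep j).trans (W_pref hstep h)

include h0 in
lemma pal_classify {k : ℕ} {p : List A} (hp : p.Palindrome) (hpref : p <+: W k) :
    ∃ i, i ≤ k ∧ p = W i := by
  induction k with
  | zero => exact ⟨0, le_refl 0, by simpa [h0] using List.prefix_nil.1 (h0 ▸ hpref)⟩
  | succ k ih =>
    by_cases hl : p.length ≤ (W k).length
    · obtain ⟨i, hik, hi⟩ := ih (List.prefix_of_prefix_length_le hpref (W_pref_succ hstep k) hl)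
      exact ⟨i, by omega, hi⟩
    · have h1 : W k ++ [δ k] <+: p :=
        List.prefix_of_prefix_length_le (pref_snoc_succ hstep k) hpref (by simp; omega)
      have h2 := (hstep k).2.2 p hp h1
      exact ⟨k+1, le_refl _, List.IsPrefix.eq_of_length hpref
        (le_antisymm hpref.length_le h2)⟩

lemma next_letter {i k : ℕ} (h : i < k) {a : A} (ha : W i ++ [a] <+: W k) : a = δ i := by
  have h1 := List.prefix_of_prefix_length_le ha (pref_snoc hstep h) (by simp)
  have h2 := List.IsPrefix.eq_of_length h1 (by simp)
  simpa using h2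

omit hstep in
include hu in
lemma W_getElem (k i : ℕ) (hi : i < (W k).length) : (W k)[i] = u i := by
  have := hu k i hi; simpa [List.get_eq_getElem] using this

omit hstep in
include hu in
lemma map_range_u {n k : ℕ} (h : n ≤ (W k).length) :
    (List.range n).map u = (W k).take n := by
  apply List.ext_getElem (by simp; omega)
  intro i h1 h2
  simp only [List.length_map, List.length_range] at h1
  rw [List.getElem_map, List.getElem_range, List.getElem_take]
  exact (W_getElem hu k i (by simp at h2; omega)).symm


omit hstep in
lemma rev3 (x y : List A) (a : A) :
    (x ++ [a] ++ y).reverse = y.reverse ++ [a] ++ x.reverse := by simp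

omit hstep in
lemma pal_pref_suffix {p q : List A} (hp : p.Palindrome) (hq : q.Palindrome)
    (h : p <+: q) : p <:+ q := by
  obtain ⟨r, rfl⟩ := h
  refine ⟨r.reverse, ?_⟩
  have h1 := hq.reverse_eq
  rw [List.reverse_append, hp.reverse_eq] at h1
  exact h1

omit hstep in
lemma pal_decomp {P X : List A} (hP : P.Palindrome) (hX : X.Palindrome) {a : A}
    (h : X ++ [a] <+: P) :
    ∃ s, P = s ++ [a] ++ X ∧ s.length + (X.length + 1) = P.length := by
  have h3 : (X ++ [a]).reverse <:+ P.reverse := List.reverse_suffix.2 h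
  rw [List.reverse_append, hX.reverse_eq, hP.reverse_eq] at h3
  simp only [List.reverse_cons, List.reverse_nil, List.nil_append] at h3
  obtain ⟨s, hs⟩ := h3
  exact ⟨s, by rw [← hs, List.append_assoc], by rw [← hs]; simp⟩

def mpos (W : ℕ → List A) (k : ℕ) : ℕ := (W (k+1)).length - (W k).length - 1

lemma mpos_add (k : ℕ) : mpos W k + 1 + (W k).length = (W (k+1)).length := by
  have := len_lt hstep k; unfold mpos; omega

include h0 in
lemma up1 (k : ℕ) : (W (k+1)).length ≤ 2 * (W k).length + 1 := by
  have hpal : (W k ++ [δ k] ++ W k).Palindrome := by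
    apply List.Palindrome.of_reverse_eq
    rw [rev3, (pal_W h0 hstep k).reverse_eq]
  have := (hstep k).2.2 _ hpal (List.prefix_append _ _)
  simp at this; omega

include h0 in
lemma mirror (k : ℕ) : ∃ z : List A, z.length = mpos W k ∧ z <+: W k ∧
    W (k+1) = z ++ [δ k] ++ W k := by
  obtain ⟨s, hs, hlen⟩ := pal_decomp (pal_W h0 hstep (k+1)) (pal_W h0 hstep k)
    (pref_snoc_succ hstep k)
  have hmp := mpos_add hstep k
  have hsl : s.length = mpos (W := W) k := by omega
  refine ⟨s, hsl, ?_, hs⟩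
  have hpre : s <+: W (k+1) := ⟨[δ k] ++ W k, by rw [hs, List.append_assoc]⟩
  have hup := up1 h0 hstep k
  exact List.prefix_of_prefix_length_le hpre (W_pref_succ hstep k) (by omega)

include h0 hu in
lemma u_mpos (k : ℕ) : u (mpos W k) = δ k := by
  obtain ⟨z, hzl, -, hz⟩ := mirror h0 hstep k
  have hlt : mpos W k < (W (k+1)).length := by have := mpos_add hstep k; omega
  have h4 : (W (k+1))[mpos W k]? = some (δ k) := by
    rw [hz, ← hzl, List.append_assoc]
    rw [List.getElem?_append_right (le_refl _)]
    simp
  have h5 := List.getElem?_eq_getElem hlt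
  rw [h4] at h5
  rw [← W_getElem hu (k+1) (mpos W k) hlt]
  exact (Option.some_injective _ h5).symm

include h0 in
lemma t_extract (k : ℕ) (hsmall : (W (k+1)).length ≤ 2 * (W k).length) :
    ∃ t : List A, t.length + (mpos W k + 1) = (W k).length ∧
      (t ++ [δ k]) <+: W k ∧ t.Palindrome := by
  obtain ⟨z, hzl, -, hz⟩ := mirror h0 hstep k
  have hmp := mpos_add hstep k
  have hm1 : z.length + 1 ≤ (W k).length := by omega
  have htake : W k = List.take (W k).length (W (k+1)) :=
    (List.prefix_iff_eq_take).1 (W_pref_succ hstep k)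
  set r := (W k).length - z.length - 1 with hr
  have h5 : (W k).length = (z ++ [δ k]).length + r := by simp; omega
  have hdec : W k = (z ++ [δ k]) ++ (W k).take r := by
    calc W k = (W (k+1)).take (W k).length := htake
    _ = ((z ++ [δ k]) ++ W k).take ((z ++ [δ k]).length + r) := by
        rw [← h5, ← hz]
    _ = (z ++ [δ k]) ++ (W k).take r := List.take_length_add_append r
  set t := (W k).take r with ht
  have htl : t.length = r := by
    simp only [ht, List.length_take]; omega
  have hrev : W k = t.reverse ++ [δ k] ++ z.reverse := by
    conv_lhs => rw [← (pal_W h0 hstep k).reverse_eq, hdec]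
    rw [rev3]
  have htpal : t.reverse = t := by
    have h1 : t.reverse = (W k).take r := by
      have h2 := congrArg (List.take r) hrev
      rw [List.append_assoc, List.take_left' (by simp [htl])] at h2
      exact h2.symm
    rw [h1, ← ht]
  refine ⟨t, by omega, ⟨z.reverse, by rw [List.append_assoc] at hrev ⊢; rw [hrev, htpal]⟩,
    List.Palindrome.of_reverse_eq htpal⟩

include h0 in
lemma low_new {k : ℕ} (hnew : ∀ i < k, δ i ≠ δ k) :
    2 * (W k).length + 1 ≤ (W (k+1)).length := by
  by_contra hcon
  obtain ⟨t, htl, htp, htpal⟩ := t_extract h0 hstep k (by omega)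
  obtain ⟨i', hik', hti⟩ := pal_classify h0 hstep htpal ((List.prefix_append _ _).trans htp)
  have hi'k : i' < k := by
    rcases Nat.lt_or_ge i' k with h | h
    · exact h
    · exfalso
      have : i' = k := le_antisymm hik' h
      subst this
      have := congrArg List.length hti
      omega
  exact hnew i' hi'k (next_letter hstep hi'k (hti ▸ htp)).symm

include h0 in
lemma low_old {i k : ℕ} (hik : i < k) (hδ : δ i = δ k)
    (hmax : ∀ i', i < i' → i' < k → δ i' ≠ δ k) :
    2 * (W k).length ≤ (W (k+1)).length + (W i).length := by
  by_contra hcon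
  have hmp := mpos_add hstep k
  obtain ⟨t, htl, htp, htpal⟩ := t_extract h0 hstep k (by have := len_mono hstep hik.le; omega)
  obtain ⟨i', hik', hti⟩ := pal_classify h0 hstep htpal ((List.prefix_append _ _).trans htp)
  have hi'k : i' < k := by
    rcases Nat.lt_or_ge i' k with h | h
    · exact h
    · exfalso
      have : i' = k := le_antisymm hik' h
      subst this
      have := congrArg List.length hti
      omega
  have hlet : δ k = δ i' := next_letter hstep hi'k (hti ▸ htp)
  have hii' : i' ≤ i := by
    by_contra h
    exact hmax i' (by omega) hi'k hlet.symm
  have h1 : (W i').length ≤ (W i).length := len_mono hstep hii'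
  have h2 := congrArg List.length hti
  omega

include h0 in
lemma up_old {i k : ℕ} (hik : i < k) (hδ : δ i = δ k) :
    (W (k+1)).length + (W i).length ≤ 2 * (W k).length := by
  obtain ⟨s, hs, hlen⟩ := pal_decomp (pal_W h0 hstep k) (pal_W h0 hstep i)
    (hδ ▸ pref_snoc hstep hik)
  have hWk2 : W k = W i ++ [δ k] ++ s.reverse := by
    conv_lhs => rw [← (pal_W h0 hstep k).reverse_eq, hs]
    rw [rev3, (pal_W h0 hstep i).reverse_eq]
  have hC2 : s ++ [δ k] ++ W k = W k ++ [δ k] ++ s.reverse := by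
    conv_lhs => rw [hWk2]
    conv_rhs => rw [hs]
    simp only [List.append_assoc]
  have hpal : (s ++ [δ k] ++ W k).Palindrome := by
    apply List.Palindrome.of_reverse_eq
    rw [rev3, (pal_W h0 hstep k).reverse_eq, ← hC2]
  have hpre : W k ++ [δ k] <+: s ++ [δ k] ++ W k := by
    rw [hC2]
    exact List.prefix_append _ _
  have := (hstep k).2.2 _ hpal hpre
  simp at this
  omega

include h0 in
lemma len_formula_old {i k : ℕ} (hik : i < k) (hδ : δ i = δ k)
    (hmax : ∀ i', i < i' → i' < k → δ i' ≠ δ k) :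
    (W (k+1)).length + (W i).length = 2 * (W k).length :=
  le_antisymm (up_old h0 hstep hik hδ) (low_old h0 hstep hik hδ hmax)

include h0 in
lemma Fm : ∀ {k j : ℕ}, j ≤ k → δ j = δ k →
    ∃ d, d + mpos W j = mpos W k ∧ OccAt (W (k+1)) (W (j+1)) d := by
  intro k
  induction k using Nat.strong_induction_on with
  | _ k IH =>
    intro j hjk hδ
    rcases Nat.lt_or_ge j k with hjk' | hge
    · set Q : ℕ → Prop := fun x => x < k ∧ δ x = δ k with hQ
      have hdec : DecidablePred Q := fun x => instDecidableAnd
      set i₂ := Nat.findGreatest Q k with hi₂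
      have hspec : Q i₂ := Nat.findGreatest_spec (le_of_lt hjk') ⟨hjk', hδ⟩
      have hji : j ≤ i₂ := Nat.le_findGreatest (le_of_lt hjk') ⟨hjk', hδ⟩
      have hmax : ∀ i', i₂ < i' → i' < k → δ i' ≠ δ k := fun i' hlt hltk he =>
        Nat.findGreatest_is_greatest hlt (by omega) ⟨hltk, he⟩
      obtain ⟨d₁, hd₁, occ₁⟩ := IH i₂ hspec.1 hji (hδ.trans hspec.2.symm)
      obtain ⟨d₂, hd₂, occ₂⟩ := suffix_occAt (pal_pref_suffix
        (pal_W h0 hstep (i₂+1)) (pal_W h0 hstep k) (W_pref hstep hspec.1))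
      have occ₄ : OccAt (W (k+1)) (W (j+1)) (d₂ + d₁) :=
        occ₁.trans (occ₂.prefix (W_pref_succ hstep k))
      refine ⟨d₂ + d₁, ?_, occ₄⟩
      have e1 := mpos_add hstep i₂
      have e2 := mpos_add hstep k
      have e3 := len_formula_old h0 hstep hspec.1 hspec.2 hmax
      omega
    · have : j = k := le_antisymm hjk hge
      subst this
      exact ⟨0, by simp, prefix_occAt (List.prefix_refl _)⟩

include h0 in
lemma Mlem : ∀ {k : ℕ} {v : List A}, v ≠ [] → v <:+: W k →
    ∃ j, j < k ∧ ∃ i, OccAt (W (j+1)) v i ∧ i ≤ mpos W j ∧ mpos W j < i + v.length := by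
  intro k
  induction k with
  | zero => intro v hv hinf; rw [h0] at hinf; exact absurd (List.eq_nil_of_infix_nil hinf) hv
  | succ k IH =>
    intro v hv hinf
    obtain ⟨z, hzl, hzp, hz⟩ := mirror h0 hstep k
    obtain ⟨i, occ⟩ := infix_occAt hinf
    by_cases hA : i + v.length ≤ mpos W k
    · have htz : (W (k+1)).take (mpos W k) = z := by
        rw [hz, List.append_assoc]; exact List.take_left' hzl
      have : v <:+: W k := ((occAt_infix (occ.take hA)).trans
        (htz ▸ hzp.isInfix))
      obtain ⟨j, hj, rest⟩ := IH hv this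
      exact ⟨j, by omega, rest⟩
    · by_cases hB : mpos W k < i
      · have hdz : (W (k+1)).drop (mpos W k + 1) = W k := by
          rw [hz, show mpos W k + 1 = (z ++ [δ k]).length by simp [hzl]]
          exact List.drop_left
        have : v <:+: W k := hdz ▸ occAt_infix (occ.drop (by omega))
        obtain ⟨j, hj, rest⟩ := IH hv this
        exact ⟨j, by omega, rest⟩
      · have hvlen : 0 < v.length := List.length_pos_iff.2 hv
        exact ⟨k, by omega, i, occ, by omega, by omega⟩

include h0 in
lemma cover {K n : ℕ} (h1 : (W K).length < n) (h2 : n ≤ (W (K+1)).length)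
    {v : List A} (hv : v ≠ []) (hinf : v <:+: (W (K+1)).take n) :
    ∃ i k, k ≤ K ∧ (∀ k', k < k' → k' ≤ K → δ k' ≠ δ k) ∧
      OccAt ((W (K+1)).take n) v i ∧ i ≤ mpos W k ∧ mpos W k < i + v.length := by
  obtain ⟨z, hzl, hzp, hz⟩ := mirror h0 hstep K
  obtain ⟨i, occ⟩ := infix_occAt hinf
  have hmK : mpos W K ≤ (W K).length := by
    have := up1 h0 hstep K; have := mpos_add hstep K; unfold mpos; omega
  have hvlen : 0 < v.length := List.length_pos_iff.2 hv
  by_cases hc1 : i ≤ mpos W K ∧ mpos W K < i + v.length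
  · exact ⟨i, K, le_refl _, by omega, occ, hc1.1, hc1.2⟩
  · -- v is a factor of W K
    have hWKinf : v <:+: W K := by
      rcases (by omega : i + v.length ≤ mpos W K ∨ mpos W K + 1 ≤ i) with hA | hB
      · have htz : ((W (K+1)).take n).take (mpos W K) = z := by
          rw [List.take_take, min_eq_left (by omega), hz, List.append_assoc]
          exact List.take_left' hzl
        exact (occAt_infix (occ.take hA)).trans (htz ▸ hzp.isInfix)
      · have hdz : (W (K+1)).drop (mpos W K + 1) = W K := by
          rw [hz, show mpos W K + 1 = (z ++ [δ K]).length by simp [hzl]]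
          exact List.drop_left
        have h3 : ((W (K+1)).take n).drop (mpos W K + 1)
            = (W K).take (n - (mpos W K + 1)) := by
          rw [List.drop_take, hdz]
        exact (occAt_infix (occ.drop hB)).trans
          (h3 ▸ ((W K).take_prefix _).isInfix)
    obtain ⟨j, hjK, i', occ', hcr1, hcr2⟩ := Mlem h0 hstep hv hWKinf
    set Q : ℕ → Prop := fun x => x ≤ K ∧ δ x = δ j with hQdef
    have hdec : DecidablePred Q := fun x => instDecidableAnd
    set k := Nat.findGreatest Q K with hkdef
    have hspec : Q k := Nat.findGreatest_spec (le_of_lt hjK) ⟨le_of_lt hjK, rfl⟩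
    have hjk : j ≤ k := Nat.le_findGreatest (le_of_lt hjK) ⟨le_of_lt hjK, rfl⟩
    have hkmax : ∀ k', k < k' → k' ≤ K → δ k' ≠ δ k := by
      intro k' hlt hle he
      exact Nat.findGreatest_is_greatest hlt hle ⟨hle, he.trans hspec.2⟩
    obtain ⟨d, hd, occF⟩ := Fm h0 hstep hjk hspec.2.symm
    have occ2 : OccAt (W (k+1)) v (d + i') := occ'.trans occF
    have hocclen : i' + v.length ≤ (W (j+1)).length := occ'.1
    have ej := mpos_add hstep j
    have eK := mpos_add hstep K
    -- end of the transferred occurrence is within W K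
    have hend : (d + i') + v.length ≤ (W K).length := by
      rcases Nat.lt_or_ge k K with hkK | hkK
      · have e1 := mpos_add hstep k
        have e2 : (W j).length ≤ (W k).length := len_mono hstep hjk
        have e3 : (W (k+1)).length ≤ (W K).length := len_mono hstep hkK
        omega
      · have hkK' : k = K := le_antisymm hspec.1 hkK
        have hδjK : δ j = δ K := by rw [← hkK']; exact hspec.2.symm
        set Q2 : ℕ → Prop := fun x => x < K ∧ δ x = δ K with hQ2
        have hdec2 : DecidablePred Q2 := fun x => instDecidableAnd
        set i₂ := Nat.findGreatest Q2 K with hi₂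
        have hspec2 : Q2 i₂ := Nat.findGreatest_spec (le_of_lt hjK) ⟨hjK, hδjK⟩
        have hji2 : j ≤ i₂ := Nat.le_findGreatest (le_of_lt hjK) ⟨hjK, hδjK⟩
        have hmax2 : ∀ i', i₂ < i' → i' < K → δ i' ≠ δ K := fun i' hlt hltk he =>
          Nat.findGreatest_is_greatest hlt (by omega) ⟨hltk, he⟩
        have e3 := len_formula_old h0 hstep hspec2.1 hspec2.2 hmax2
        have e4 : (W j).length ≤ (W i₂).length := len_mono hstep hji2
        have e5 : mpos W k = mpos W K := by rw [hkK']
        omega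
    have occP : OccAt ((W (K+1)).take n) v (d + i') :=
      (occ2.prefix (W_pref hstep (by omega))).take (by omega)
    exact ⟨d + i', k, hspec.1, hkmax, occP, by omega, by omega⟩

include h0 in
lemma mem_W_iff {k : ℕ} {a : A} : a ∈ W k ↔ ∃ i, i < k ∧ δ i = a := by
  induction k with
  | zero => rw [h0]; simp
  | succ k IH =>
    obtain ⟨z, hzl, hzp, hz⟩ := mirror h0 hstep k
    constructor
    · intro ha
      rw [hz] at ha
      simp only [List.mem_append, List.mem_singleton] at ha
      rcases ha with (haz | hak) | haW
      · obtain ⟨i, hik, hi⟩ := IH.1 (hzp.sublist.subset haz)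
        exact ⟨i, by omega, hi⟩
      · exact ⟨k, by omega, hak.symm⟩
      · obtain ⟨i, hik, hi⟩ := IH.1 haW
        exact ⟨i, by omega, hi⟩
    · rintro ⟨i, hik, rfl⟩
      rcases Nat.lt_or_ge i k with h | h
      · exact (W_pref_succ hstep k).sublist.subset (IH.2 ⟨i, h, rfl⟩)
      · have hik' : i = k := by omega
        subst hik'
        rw [hz]
        simp

omit hstep in
lemma mpos_le (k : ℕ) (h1 : (W (k+1)).length ≤ 2 * (W k).length + 1)
    (h2 : mpos W k + 1 + (W k).length = (W (k+1)).length) :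
    mpos W k ≤ (W k).length := by omega

end Epi

lemma attractor_nil : IsAttractor ([] : List A) ∅ :=
  ⟨by simp, fun v hv hinf => absurd (List.eq_nil_of_infix_nil hinf) hv⟩

lemma attractor_lower [DecidableEq A] {w : List A} {Γ : Set ℕ}
    (h : IsAttractor w Γ) : w.toFinset.card ≤ Γ.ncard := by
  classical
  have hfin : Γ.Finite := Set.Finite.subset (Set.finite_Iio w.length)
    (fun k hk => h.1 k hk)
  have hch : ∀ a ∈ w.toFinset, ∃ k, k ∈ hfin.toFinset ∧
      ∃ hk : k < w.length, w.get ⟨k, hk⟩ = a := by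
    intro a ha
    rw [List.mem_toFinset] at ha
    obtain ⟨s, t, hw⟩ := List.append_of_mem ha
    have hinf : [a] <:+: w := ⟨s, t, by rw [hw]; simp⟩
    obtain ⟨i, occ, k, hkΓ, hik1, hik2⟩ := h.2 [a] (by simp) hinf
    have hki : k = i := by simp at hik2; omega
    subst hki
    obtain ⟨hlen, htake⟩ := occ
    simp only [List.length_singleton] at hlen
    have hklen : k < w.length := by omega
    refine ⟨k, hfin.mem_toFinset.2 hkΓ, hklen, ?_⟩
    obtain ⟨s', t', hw', hsl⟩ := occAt_iff.1 ⟨by simpa using hlen, htake⟩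
    have h4 : w[k]? = some a := by
      rw [hw', ← hsl, List.append_assoc, List.getElem?_append_right (le_refl _)]
      simp
    have h5 := List.getElem?_eq_getElem hklen
    rw [h4] at h5
    rw [List.get_eq_getElem]
    exact (Option.some_injective _ h5).symm
  have hex : ∃ f : A → ℕ, ∀ a ∈ w.toFinset, f a ∈ hfin.toFinset ∧
      ∃ hk : f a < w.length, w.get ⟨f a, hk⟩ = a := by
    choose f hf using hch
    refine ⟨fun a => if h' : a ∈ w.toFinset then f a h' else 0, fun a ha => ?_⟩
    dsimp only
    rw [dif_pos ha]
    exact hf a ha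
  obtain ⟨f, hf⟩ := hex
  have hcard : w.toFinset.card ≤ hfin.toFinset.card := by
    apply Finset.card_le_card_of_injOn f (fun a ha => (hf a ha).1)
    intro a₁ h₁ a₂ h₂ he
    rw [Finset.mem_coe] at h₁ h₂
    obtain ⟨hk1, hw1⟩ := (hf a₁ h₁).2
    obtain ⟨hk2, hw2⟩ := (hf a₂ h₂).2
    rw [← hw1, ← hw2]
    congr 1
    exact Fin.ext he
  rwa [← Set.ncard_eq_toFinset_card Γ hfin] at hcard


theorem episturmian_profile [DecidableEq A] [Fintype A]
    (W : ℕ → List A) (δ : ℕ → A)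
    (h0 : W 0 = []) (hstep : ∀ n, IsPalClosure (W n) (δ n) (W (n+1)))
    (u : ℕ → A)
    (hu : ∀ n i, (hi : i < (W n).length) → (W n).get ⟨i, hi⟩ = u i)
    (hlen : ∀ N, ∃ n, N ≤ (W n).length) :
    (∀ n, sInf {c | ∃ Γ : Set ℕ, IsAttractor ((List.range n).map u) Γ ∧ Γ.ncard = c} =
        ((List.range n).map u).toFinset.card) ∧
    ∃ N, ∀ n, N ≤ n →
      sInf {c | ∃ Γ : Set ℕ, IsAttractor ((List.range n).map u) Γ ∧ Γ.ncard = c} =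
      sInf {c | ∃ Γ : Set ℕ, IsAttractor ((List.range N).map u) Γ ∧ Γ.ncard = c} := by
  have key : ∀ n, sInf {c | ∃ Γ : Set ℕ,
      IsAttractor ((List.range n).map u) Γ ∧ Γ.ncard = c} =
      ((List.range n).map u).toFinset.card := by
    intro n
    rcases Nat.eq_zero_or_pos n with hn0 | hn1
    · subst hn0
      simp only [List.range_zero, List.map_nil]
      have hmem : 0 ∈ {c | ∃ Γ : Set ℕ, IsAttractor ([] : List A) Γ ∧ Γ.ncard = c} :=
        ⟨∅, attractor_nil, Set.ncard_empty _⟩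
      have hle := Nat.sInf_le hmem
      simp only [List.toFinset_nil, Finset.card_empty]
      omega
    · have hKex : ∃ K, (W K).length < n ∧ n ≤ (W (K+1)).length := by
        set R : ℕ → Prop := fun k => (W k).length < n with hR
        set K := Nat.findGreatest R n with hK
        have hR0 : R 0 := by show (W 0).length < n; rw [h0]; simpa using hn1
        have hspec : R K := Nat.findGreatest_spec (Nat.zero_le n) hR0
        have hnot : ¬ R (K+1) := by
          intro hcon
          have hlen1 : K + 1 ≤ (W (K+1)).length := le_len hstep (K+1)
          exact Nat.findGreatest_is_greatest (Nat.lt_succ_self K) (by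
            have : (W (K+1)).length < n := hcon
            omega) hcon
        exact ⟨K, hspec, by simpa [hR] using hnot⟩
      obtain ⟨K, h1, h2⟩ := hKex
      set P := (List.range n).map u with hPdef
      have hPW : P = (W (K+1)).take n := map_range_u hu (by omega)
      have hPlen : P.length = n := by rw [hPdef]; simp
      have hpre : W K ++ [δ K] <+: P := by
        rw [hPW]
        apply List.prefix_of_prefix_length_le (pref_snoc_succ hstep K)
          (List.take_prefix _ _)
        simp
        omega
      have hmemP : ∀ k ≤ K, δ k ∈ P.toFinset := by
        intro k hk
        rw [List.mem_toFinset]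
        rcases Nat.lt_or_ge k K with hkK | hkK
        · exact hpre.sublist.subset
            (List.mem_append.2 (Or.inl ((mem_W_iff h0 hstep).2 ⟨k, hkK, rfl⟩)))
        · have hkK' : k = K := by omega
          subst hkK'
          exact hpre.sublist.subset (List.mem_append.2 (Or.inr (by simp)))
      have hletters : ∀ a ∈ P.toFinset, ∃ i, i ≤ K ∧ δ i = a := by
        intro a ha
        rw [List.mem_toFinset, hPW] at ha
        obtain ⟨i, hik, hi⟩ := (mem_W_iff h0 hstep).1 ((List.take_sublist _ _).subset ha)
        exact ⟨i, by omega, hi⟩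
      set lastK : A → ℕ := fun a => Nat.findGreatest (fun x => δ x = a) K with hlastK
      have hlast1 : ∀ a ∈ P.toFinset, δ (lastK a) = a := by
        intro a ha
        obtain ⟨i, hiK, hi⟩ := hletters a ha
        show δ (Nat.findGreatest (fun x => δ x = a) K) = a
        exact Nat.findGreatest_spec (P := fun x => δ x = a) hiK hi
      have hlastle : ∀ a, lastK a ≤ K := fun a => Nat.findGreatest_le (P := fun x => δ x = a) K
      have humpos : ∀ k, u (mpos W k) = δ k := u_mpos h0 hstep hu
      set F : A → ℕ := fun a => mpos W (lastK a) with hF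
      have huF : ∀ a ∈ P.toFinset, u (F a) = a := by
        intro a ha
        show u (mpos W (lastK a)) = a
        rw [humpos]
        exact hlast1 a ha
      have hinj : Set.InjOn F ↑P.toFinset := by
        intro a₁ ha₁ a₂ ha₂ he
        rw [Finset.mem_coe] at ha₁ ha₂
        rw [← huF a₁ ha₁, ← huF a₂ ha₂, he]
      set Γfin := P.toFinset.image F with hΓ
      have hcardΓ : Γfin.card = P.toFinset.card := Finset.card_image_of_injOn hinj
      have hmpos_lt : ∀ k, k ≤ K → mpos W k < n := by
        intro k hk
        have e1 := up1 h0 hstep k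
        have e2 := mpos_add hstep k
        have e3 : (W k).length ≤ (W K).length := len_mono hstep hk
        omega
      have hattr : IsAttractor P ↑Γfin := by
        constructor
        · intro x hx
          rw [Finset.mem_coe, hΓ, Finset.mem_image] at hx
          obtain ⟨a, ha, rfl⟩ := hx
          rw [hPlen]
          exact hmpos_lt _ (hlastle a)
        · intro v hv hinf
          rw [hPW] at hinf
          obtain ⟨i, k, hkK, hkmax, occ, hc1, hc2⟩ := cover h0 hstep h1 h2 hv hinf
          refine ⟨i, by rw [hPW]; exact occ, mpos W k, ?_, hc1, hc2⟩
          rw [Finset.mem_coe, hΓ, Finset.mem_image]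
          refine ⟨δ k, hmemP k hkK, ?_⟩
          have hle1 : k ≤ lastK (δ k) := Nat.le_findGreatest (P := fun x => δ x = δ k) hkK rfl
          have hle2 : lastK (δ k) ≤ k := by
            by_contra hcon
            exact hkmax (lastK (δ k)) (by omega) (hlastle _)
              (hlast1 (δ k) (hmemP k hkK))
          show mpos W (lastK (δ k)) = mpos W k
          rw [le_antisymm hle2 hle1]
      have hmem : P.toFinset.card ∈ {c | ∃ Γ : Set ℕ, IsAttractor P Γ ∧ Γ.ncard = c} :=
        ⟨↑Γfin, hattr, by rw [Set.ncard_coe_finset]; exact hcardΓ⟩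
      apply le_antisymm (Nat.sInf_le hmem)
      apply le_csInf ⟨_, hmem⟩
      rintro c ⟨Γ, hΓa, rfl⟩
      exact attractor_lower hΓa
  refine ⟨key, ?_⟩
  set f : ℕ → ℕ := fun n => ((List.range n).map u).toFinset.card with hf
  have hbdd : BddAbove (Set.range f) := by
    refine ⟨Fintype.card A, ?_⟩
    rintro x ⟨n, rfl⟩
    exact Finset.card_le_univ _
  obtain ⟨N, hN⟩ := Nat.sSup_mem (Set.range_nonempty f) hbdd
  refine ⟨N, fun n hn => ?_⟩
  rw [key, key]
  have hmono : f N ≤ f n := by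
    apply Finset.card_le_card
    intro a ha
    rw [List.mem_toFinset] at ha ⊢
    simp only [List.mem_map, List.mem_range] at ha ⊢
    obtain ⟨i, hi, rfl⟩ := ha
    exact ⟨i, by omega, rfl⟩
  have hup : f n ≤ f N := by
    have h6 : f n ≤ sSup (Set.range f) := le_csSup hbdd ⟨n, rfl⟩
    rw [← hN] at h6
    exact h6
  exact le_antisymm hup hmono
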